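/- arXiv:math/0004041 — 2 statements merged into one kernel-verified Lean document; each statement's English description precedes it below -/
import Mathlib

section
/- Given a short exact sequence of finite-dimensional Lie algebras 0 → a → b → h → 0 where each Lie algebra decomposes as center plus semisimple part, the semisimple parts form a short exact sequence 0 → a_ss → b_ss → h_ss → 0, and similarly the centers form a short exact sequence 0 → z(a) → z(b) → z(h) → 0. -/
/-!
Write each algebra as `z ⊕ s` with `z` its center and `s = ⁅g, g⁆`. Surjectivity of `μ` gives
`μ(s_b) = s_h` and `μ(z_b) ≤ z_h`, and the modular law upgrades the latter to an equality because
`μ(z_b) ⊔ s_h = h` and `z_h ⊓ s_h = ⊥`. Elements of `a` centralizing `a` form an abelian ideal of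
`b`; its intersection with `s_b` is an abelian ideal of `s_b`, hence zero, so it commutes with
`s_b` as well as with `z_b` and is central in `b`. Thus `z(a) = a ⊓ z(b)`, and the modular law in
the ideals of `a` gives `⁅a, a⁆ = a ⊓ ⁅b, b⁆`, as `a ⊓ ⁅b, b⁆` meets `z(a) ≤ z(b)` trivially.
-/

open LieAlgebra

namespace LieAlgebra

variable {R L L' : Type*} [CommRing R] [LieRing L] [LieAlgebra R L] [LieRing L'] [LieAlgebra R L']

theorem map_center_le_of_surjective {f : L →ₗ⁅R⁆ L'} (hf : Function.Surjective f) :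
    LieIdeal.map f (center R L) ≤ center R L' := by
  rw [LieIdeal.map_le_iff_le_comap]
  intro x hx
  rw [LieIdeal.mem_comap, LieModule.mem_maxTrivSubmodule]
  intro y
  obtain ⟨w, rfl⟩ := hf y
  rw [← f.map_lie, (LieModule.mem_maxTrivSubmodule R L L x).mp hx w, map_zero]

theorem map_center_eq_of_surjective {f : L →ₗ⁅R⁆ L'} (hf : Function.Surjective f)
    (hL : Codisjoint (center R L) ⁅(⊤ : LieIdeal R L), ⊤⁆)
    (hL' : Disjoint (center R L') ⁅(⊤ : LieIdeal R L'), ⊤⁆) :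
    LieIdeal.map f (center R L) = center R L' := by
  refine eq_of_le_of_inf_le_of_sup_le (z := ⁅(⊤ : LieIdeal R L'), ⊤⁆)
    (map_center_le_of_surjective hf) (by rw [hL'.eq_bot]; exact bot_le) ?_
  calc center R L' ⊔ ⁅(⊤ : LieIdeal R L'), ⊤⁆ ≤ LieIdeal.map f ⊤ :=
        le_top.trans (LieIdeal.derivedSeries_map_eq 0 hf).ge
    _ = LieIdeal.map f (center R L) ⊔ ⁅(⊤ : LieIdeal R L'), ⊤⁆ := by
        rw [← hL.eq_top, LieIdeal.map_sup]
        exact congrArg _ (LieIdeal.derivedSeries_map_eq 1 hf)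

theorem le_center_of_isLieAbelian {J : LieIdeal R L} [HasTrivialRadical R J]
    (hJ : Codisjoint (center R L) J) (I : LieIdeal R L) [hI : IsLieAbelian I] :
    I ≤ center R L := by
  have hIJ : Disjoint J I := by
    rw [← LieIdeal.comap_incl_eq_bot]
    have : IsLieAbelian (I.comap J.incl) := by
      rw [LieSubmodule.lie_abelian_iff_lie_self_eq_bot, eq_bot_iff]
      calc ⁅I.comap J.incl, I.comap J.incl⁆ ≤ ⁅I, I⁆.comap J.incl := LieIdeal.comap_bracket_le _
        _ = ⊥ := by
          rw [(LieSubmodule.lie_abelian_iff_lie_self_eq_bot I).mp hI]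
          exact J.ker_incl
    exact HasTrivialRadical.eq_bot_of_isSolvable _
  have hcI : ⁅center R L, I⁆ = ⊥ := by
    rw [LieSubmodule.lie_comm, eq_bot_iff]
    exact (LieSubmodule.mono_lie_left _ le_top).trans
      (LieModule.ideal_oper_maxTrivSubmodule_eq_bot R L L ⊤).le
  rw [LieModule.le_max_triv_iff_bracket_eq_bot, ← hJ.eq_top, LieSubmodule.sup_lie, hcI, bot_sup_eq,
    eq_bot_iff]
  exact (LieSubmodule.lie_le_inf _ _).trans hIJ.le_bot

end LieAlgebra

namespace LieIdeal

variable {R L : Type*} [CommRing R] [LieRing L] [LieAlgebra R L]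

theorem center_eq_comap_incl {J : LieIdeal R L} [HasTrivialRadical R J]
    (hJ : Codisjoint (center R L) J) (I : LieIdeal R L) :
    center R I = (center R L).comap I.incl := by
  refine le_antisymm (fun x hx => ?_) (fun x hx => ?_)
  · -- `LieModule.ker R L I` is the centralizer of `I` in `L`.
    let A : LieIdeal R L := I ⊓ LieModule.ker R L I
    have : IsLieAbelian A := by
      rw [LieSubmodule.lie_abelian_iff_lie_self_eq_bot, eq_bot_iff]
      calc ⁅A, A⁆ ≤ ⁅LieModule.ker R L I, I⁆ := LieSubmodule.mono_lie inf_le_right inf_le_left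
        _ = ⊥ := (LieSubmodule.lie_eq_bot_iff _ _).mpr fun y hy m hm =>
          congrArg Subtype.val ((LieModule.mem_ker R L I y).mp hy ⟨m, hm⟩)
    refine le_center_of_isLieAbelian hJ A ⟨x.2, (LieModule.mem_ker R L I x).mpr fun m => ?_⟩
    refine Subtype.ext ?_
    change ⁅(x : L), (m : L)⁆ = 0
    rw [← lie_skew, neg_eq_zero]
    exact congrArg Subtype.val ((LieModule.mem_maxTrivSubmodule R I I x).mp hx m)
  · exact (LieModule.mem_maxTrivSubmodule R I I x).mpr fun y =>
      Subtype.ext ((LieModule.mem_maxTrivSubmodule R L L x).mp hx y)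

theorem top_lie_top_eq_comap_incl (I : LieIdeal R L)
    (hL : Disjoint (center R L) ⁅(⊤ : LieIdeal R L), ⊤⁆)
    (hI : Codisjoint (center R I) ⁅(⊤ : LieIdeal R I), ⊤⁆)
    (hcenter : center R I ≤ (center R L).comap I.incl) :
    ⁅(⊤ : LieIdeal R I), ⊤⁆ = comap I.incl ⁅(⊤ : LieIdeal R L), ⊤⁆ := by
  refine eq_of_le_of_inf_le_of_sup_le (z := center R I) ?_ ?_ ?_
  · exact map_le_iff_le_comap.mp (derivedSeries_map_le 1)
  · rintro x ⟨hxD, hxz⟩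
    have hx : (x : L) ∈ center R L ⊓ ⁅(⊤ : LieIdeal R L), ⊤⁆ := ⟨hcenter hxz, hxD⟩
    rw [hL.eq_bot, LieSubmodule.mem_bot, ZeroMemClass.coe_eq_zero] at hx
    rw [hx]
    exact zero_mem _
  · exact le_top.trans_eq hI.symm.eq_top.symm

end LieIdeal

theorem exactness_of_centers_and_semisimple_parts_general
    {b : Type*} [LieRing b] [LieAlgebra ℝ b]
    {h : Type*} [LieRing h] [LieAlgebra ℝ h]
    (μ : b →ₗ⁅ℝ⁆ h) (hμ : Function.Surjective μ)
    (hb : IsCompl (LieAlgebra.center ℝ b) ⁅(⊤ : LieIdeal ℝ b), (⊤ : LieIdeal ℝ b)⁆)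
    (hbss : LieAlgebra.IsSemisimple ℝ
      (↥(⁅(⊤ : LieIdeal ℝ b), (⊤ : LieIdeal ℝ b)⁆ : LieIdeal ℝ b)))
    (hh : IsCompl (LieAlgebra.center ℝ h) ⁅(⊤ : LieIdeal ℝ h), (⊤ : LieIdeal ℝ h)⁆)
    (ha : IsCompl (LieAlgebra.center ℝ (↥μ.ker))
      ⁅(⊤ : LieIdeal ℝ (↥μ.ker)), (⊤ : LieIdeal ℝ (↥μ.ker))⁆) :
    -- the centers form a short exact sequence `0 → z(a) → z(b) → z(h) → 0`:
    LieIdeal.map μ (LieAlgebra.center ℝ b) = LieAlgebra.center ℝ h ∧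
    (∀ x : μ.ker, (x ∈ LieAlgebra.center ℝ (↥μ.ker) ↔
      (x : b) ∈ LieAlgebra.center ℝ b)) ∧
    -- the semisimple parts form a short exact sequence `0 → a_ss → b_ss → h_ss → 0`:
    LieIdeal.map μ ⁅(⊤ : LieIdeal ℝ b), (⊤ : LieIdeal ℝ b)⁆
      = ⁅(⊤ : LieIdeal ℝ h), (⊤ : LieIdeal ℝ h)⁆ ∧
    (∀ x : μ.ker, (x ∈ (⁅(⊤ : LieIdeal ℝ (↥μ.ker)), (⊤ : LieIdeal ℝ (↥μ.ker))⁆ :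
        LieIdeal ℝ (↥μ.ker)) ↔
      (x : b) ∈ (⁅(⊤ : LieIdeal ℝ b), (⊤ : LieIdeal ℝ b)⁆ : LieIdeal ℝ b))) := by
  have hcenter := LieIdeal.center_eq_comap_incl hb.codisjoint μ.ker
  have hderived := LieIdeal.top_lie_top_eq_comap_incl μ.ker hb.disjoint ha.codisjoint hcenter.le
  exact ⟨map_center_eq_of_surjective hμ hb.codisjoint hh.disjoint,
    fun x => SetLike.ext_iff.mp hcenter x, LieIdeal.derivedSeries_map_eq 1 hμ,
    fun x => SetLike.ext_iff.mp hderived x⟩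

/-- **Exactness of centers and semisimple parts.**
Let `0 → a → b → h → 0` be a short exact sequence of finite-dimensional real Lie algebras,
given by a surjective homomorphism `μ : b → h` with kernel `a = ker μ`.  Assume each of
`b`, `h` and `a` is the direct sum of its center and its (semisimple) derived ideal, as is
the case for Lie algebras of compact Lie groups.  Then `μ` maps the center of `b` onto the
center of `h`, with kernel (inside the center of `b`) the center of `a`, and maps the
derived (semisimple) part of `b` onto that of `h`, with kernel the semisimple part of `a`. -/
theorem exactness_of_centers_and_semisimple_parts
    {b : Type*} [LieRing b] [LieAlgebra ℝ b] [Module.Finite ℝ b]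
    {h : Type*} [LieRing h] [LieAlgebra ℝ h] [Module.Finite ℝ h]
    (μ : b →ₗ⁅ℝ⁆ h) (hμ : Function.Surjective μ)
    (hb : IsCompl (LieAlgebra.center ℝ b) ⁅(⊤ : LieIdeal ℝ b), (⊤ : LieIdeal ℝ b)⁆)
    (hbss : LieAlgebra.IsSemisimple ℝ
      (↥(⁅(⊤ : LieIdeal ℝ b), (⊤ : LieIdeal ℝ b)⁆ : LieIdeal ℝ b)))
    (hh : IsCompl (LieAlgebra.center ℝ h) ⁅(⊤ : LieIdeal ℝ h), (⊤ : LieIdeal ℝ h)⁆)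
    (hhss : LieAlgebra.IsSemisimple ℝ
      (↥(⁅(⊤ : LieIdeal ℝ h), (⊤ : LieIdeal ℝ h)⁆ : LieIdeal ℝ h)))
    (ha : IsCompl (LieAlgebra.center ℝ (↥μ.ker))
      ⁅(⊤ : LieIdeal ℝ (↥μ.ker)), (⊤ : LieIdeal ℝ (↥μ.ker))⁆)
    (hass : LieAlgebra.IsSemisimple ℝ
      (↥(⁅(⊤ : LieIdeal ℝ (↥μ.ker)), (⊤ : LieIdeal ℝ (↥μ.ker))⁆ : LieIdeal ℝ (↥μ.ker)))) :
    -- the centers form a short exact sequence `0 → z(a) → z(b) → z(h) → 0`: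
    LieIdeal.map μ (LieAlgebra.center ℝ b) = LieAlgebra.center ℝ h ∧
    (∀ x : μ.ker, (x ∈ LieAlgebra.center ℝ (↥μ.ker) ↔
      (x : b) ∈ LieAlgebra.center ℝ b)) ∧
    -- the semisimple parts form a short exact sequence `0 → a_ss → b_ss → h_ss → 0`:
    LieIdeal.map μ ⁅(⊤ : LieIdeal ℝ b), (⊤ : LieIdeal ℝ b)⁆
      = ⁅(⊤ : LieIdeal ℝ h), (⊤ : LieIdeal ℝ h)⁆ ∧
    (∀ x : μ.ker, (x ∈ (⁅(⊤ : LieIdeal ℝ (↥μ.ker)), (⊤ : LieIdeal ℝ (↥μ.ker))⁆ :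
        LieIdeal ℝ (↥μ.ker)) ↔
      (x : b) ∈ (⁅(⊤ : LieIdeal ℝ b), (⊤ : LieIdeal ℝ b)⁆ : LieIdeal ℝ b))) :=
  exactness_of_centers_and_semisimple_parts_general μ hμ hb hbss hh ha
end

section
/- If f ∈ L^p(Ω₁) for an open set Ω₁ ⊆ ℝⁿ depends only on the first d coordinates, and Ω₂ is open with compact closure contained in Ω₁, then f ∈ L^p_d(Ω₂) with ‖f‖_{L^p_d(Ω₂)} ≤ c ‖f‖_{L^p(Ω₁)} for a constant c depending only on Ω₁, Ω₂, n, d, p. -/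
open MeasureTheory Metric
open scoped ENNReal

/-!
Thicken `closure Ω₂` by some `ε > 0` inside `Ω₁`. Given a ball `B` of radius `ρ`, translate
`B ∩ Ω₂` by the points of a grid of mesh `2ρ` and diameter at most `ε` in the last `n - d`
coordinate directions. The translates are pairwise disjoint, lie in `Ω₁`, number about
`(ε / ρ) ^ (n - d)`, and `|f| ^ p` has the same integral over each of them because `f` ignores
these directions. Hence `ρ ^ (d - n) ‖f‖_{L^p(B ∩ Ω₂)} ^ p ≲ ε ^ (d - n) ‖f‖_{L^p(Ω₁)} ^ p`.
-/

/-- The Morrey norm `‖f‖_{L^p_d(Ω)}` on a subset `Ω ⊆ ℝⁿ`: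
`‖f‖_{L^p_d(Ω)}^p = ‖f‖_{L^p(Ω)}^p + sup_{ρ∈(0,1]} sup_x ρ^{d−n} ‖f‖_{L^p(B_ρ(x)∩Ω)}^p`. -/
noncomputable def morreyNormOn (n : ℕ) (p d : ℝ) (Ω : Set (EuclideanSpace ℝ (Fin n)))
    (f : EuclideanSpace ℝ (Fin n) → ℝ) : ℝ≥0∞ :=
  (eLpNorm f (ENNReal.ofReal p) (volume.restrict Ω) ^ p +
    ⨆ (ρ : ℝ) (_ : ρ ∈ Set.Ioc (0 : ℝ) 1) (x : EuclideanSpace ℝ (Fin n)),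
      ENNReal.ofReal (ρ ^ (d - n)) *
        eLpNorm f (ENNReal.ofReal p) ((volume.restrict Ω).restrict (ball x ρ)) ^ p) ^ (1 / p)

section Packing

variable {E : Type*} [NormedAddCommGroup E] [MeasurableSpace E] [MeasurableAdd E]
  {μ : Measure E} [μ.IsAddRightInvariant] {g : E → ℝ≥0∞}

theorem Function.Periodic.setLIntegral_preimage_add_right {v : E} (hg : Function.Periodic g v)
    (s : Set E) : ∫⁻ z in (· + v) ⁻¹' s, g z ∂μ = ∫⁻ z in s, g z ∂μ := by
  simpa only [show ∀ z, g (z + v) = g z from hg] using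
    (measurePreserving_add_right μ v).setLIntegral_comp_preimage_emb
      (measurableEmbedding_addRight v) g s

theorem card_mul_setLIntegral_le_of_separated {ι : Type*} [Fintype ι] {v : ι → E} {s U : Set E}
    {x : E} {ρ : ℝ} (hs : MeasurableSet s) (hsx : s ⊆ ball x ρ)
    (hsep : Pairwise fun i j => 2 * ρ ≤ ‖v i - v j‖) (hg : ∀ i, Function.Periodic g (v i))
    (hU : ∀ i, (· + v i) ⁻¹' s ⊆ U) :
    Fintype.card ι * ∫⁻ z in s, g z ∂μ ≤ ∫⁻ z in U, g z ∂μ := by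
  have hdisj : Pairwise (Function.onFun Disjoint fun i => (· + v i) ⁻¹' s) := by
    refine fun i j hij => Set.disjoint_left.2 fun z hi hj => (hsep hij).not_gt ?_
    calc ‖v i - v j‖ = dist (z + v i) (z + v j) := by rw [dist_add_left, dist_eq_norm]
      _ ≤ dist (z + v i) x + dist (z + v j) x := dist_triangle_right _ _ _
      _ < ρ + ρ := add_lt_add (hsx hi) (hsx hj)
      _ = 2 * ρ := by ring
  calc Fintype.card ι * ∫⁻ z in s, g z ∂μ = ∑ i, ∫⁻ z in (· + v i) ⁻¹' s, g z ∂μ := by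
        simp [(hg _).setLIntegral_preimage_add_right]
    _ = ∫⁻ z in ⋃ i, (· + v i) ⁻¹' s, g z ∂μ := by
        rw [lintegral_iUnion (fun i => hs.preimage (measurable_add_const _)) hdisj, tsum_fintype]
    _ ≤ ∫⁻ z in U, g z ∂μ := lintegral_mono_set (Set.iUnion_subset hU)

end Packing

theorem EuclideanSpace.exists_grid {ι : Type*} [Fintype ι] (T : Finset ι) (m : ℕ) {δ : ℝ}
    (hδ : 0 ≤ δ) :
    ∃ v : (T → Fin (m + 1)) → EuclideanSpace ℝ ι, (∀ j, ∀ i ∉ T, v j i = 0) ∧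
      Pairwise (fun j j' => δ ≤ ‖v j - v j'‖) ∧
      ∀ j, ‖v j‖ ≤ √(Fintype.card ι) * (δ * m) := by
  classical
  set v : (T → Fin (m + 1)) → EuclideanSpace ℝ ι :=
    fun j => WithLp.toLp 2 fun i => if h : i ∈ T then δ * j ⟨i, h⟩ else 0
  refine ⟨v, fun j i hi => by simp [v, hi], fun j j' hjj' => ?_, fun j => ?_⟩
  · obtain ⟨⟨i, hi⟩, hji⟩ := Function.ne_iff.1 hjj'
    have hne : ((j ⟨i, hi⟩ : ℕ) : ℤ) ≠ j' ⟨i, hi⟩ := by exact_mod_cast Fin.val_ne_of_ne hji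
    have hdist : (1 : ℝ) ≤ |(j ⟨i, hi⟩ : ℝ) - j' ⟨i, hi⟩| := by
      exact_mod_cast Int.one_le_abs (sub_ne_zero.2 hne)
    calc δ ≤ δ * |(j ⟨i, hi⟩ : ℝ) - j' ⟨i, hi⟩| := le_mul_of_one_le_right hδ hdist
      _ = ‖(v j - v j') i‖ := by simp [v, hi, ← mul_sub, abs_of_nonneg hδ]
      _ ≤ ‖v j - v j'‖ := PiLp.norm_apply_le _ i
  · have hsup : ‖(v j).ofLp‖ ≤ δ * m := by
      refine (pi_norm_le_iff_of_nonneg (by positivity)).2 fun i => ?_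
      by_cases hi : i ∈ T
      · simp only [v, hi, dite_true, Real.norm_eq_abs, abs_mul, abs_of_nonneg hδ, Nat.abs_cast]
        gcongr
        exact_mod_cast Fin.is_le _
      · simp [v, hi]; positivity
    have hK : (((Fintype.card ι : NNReal) ^ (1 / (2 : ℝ≥0∞)).toReal : NNReal) : ℝ) =
        √(Fintype.card ι) := by
      simp [Real.sqrt_eq_rpow]
    calc ‖v j‖ ≤ _ := (PiLp.lipschitzWith_toLp 2 fun _ : ι => ℝ).norm_le_mul rfl (v j).ofLp
      _ ≤ √(Fintype.card ι) * (δ * m) := by rw [hK]; gcongr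

theorem exists_nat_mul_le_and_inv_le {a ρ ε : ℝ} (ha : 0 < a) (hρ : 0 < ρ) (hε : 0 < ε) :
    ∃ m : ℕ, a * ρ * m ≤ ε ∧ ρ⁻¹ ≤ a / ε * (m + 1) := by
  refine ⟨⌊ε / (a * ρ)⌋₊, (le_div_iff₀' (by positivity)).1 (Nat.floor_le (by positivity)), ?_⟩
  calc ρ⁻¹ = a / ε * (ε / (a * ρ)) := by field_simp
    _ ≤ a / ε * (⌊ε / (a * ρ)⌋₊ + 1) := by gcongr; exact (Nat.lt_floor_add_one _).le

theorem inv_pow_card_mul_setLIntegral_ball_inter_le {ι : Type*} [Fintype ι] (T : Finset ι)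
    {g : EuclideanSpace ℝ ι → ℝ≥0∞}
    (hg : ∀ v : EuclideanSpace ℝ ι, (∀ i ∉ T, v i = 0) → Function.Periodic g v)
    {s U : Set (EuclideanSpace ℝ ι)} (hs : MeasurableSet s) {ε : ℝ} (hε : 0 < ε)
    (hU : cthickening ε s ⊆ U) {ρ : ℝ} (hρ : 0 < ρ) (x : EuclideanSpace ℝ ι) :
    ENNReal.ofReal (ρ⁻¹ ^ T.card) * ∫⁻ z in ball x ρ ∩ s, g z ≤
      ENNReal.ofReal ((2 * √(Fintype.card ι) / ε) ^ T.card) * ∫⁻ z in U, g z := by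
  classical
  rcases T.eq_empty_or_nonempty with rfl | ⟨i, -⟩
  · simpa using lintegral_mono_set
      (Set.inter_subset_right.trans ((self_subset_cthickening s).trans hU))
  have ha : 0 < 2 * √(Fintype.card ι) := by
    have := Fintype.card_pos_iff.2 ⟨i⟩
    positivity
  obtain ⟨m, hmε, hρm⟩ := exists_nat_mul_le_and_inv_le ha hρ hε
  obtain ⟨v, hvT, hsep, hv⟩ := EuclideanSpace.exists_grid T m (δ := 2 * ρ) (by positivity)
  have hpack := card_mul_setLIntegral_le_of_separated (μ := volume)
    (x := x) (measurableSet_ball.inter hs) Set.inter_subset_left hsep (fun j => hg _ (hvT j))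
    fun j z hz => hU <| mem_cthickening_of_dist_le z (z + v j) ε s hz.2 <| by
      rw [dist_self_add_right]
      linarith [hv j]
  rw [Fintype.card_fun, Fintype.card_coe, Fintype.card_fin] at hpack
  have hconst : ENNReal.ofReal (ρ⁻¹ ^ T.card) ≤
      ENNReal.ofReal ((2 * √(Fintype.card ι) / ε) ^ T.card) * ((m + 1) ^ T.card : ℕ) := by
    rw [← ENNReal.ofReal_natCast, ← ENNReal.ofReal_mul (by positivity)]
    refine ENNReal.ofReal_le_ofReal ?_
    push_cast
    rw [← mul_pow]
    gcongr
  calc ENNReal.ofReal (ρ⁻¹ ^ T.card) * ∫⁻ z in ball x ρ ∩ s, g z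
      ≤ ENNReal.ofReal ((2 * √(Fintype.card ι) / ε) ^ T.card) *
          (((m + 1) ^ T.card : ℕ) * ∫⁻ z in ball x ρ ∩ s, g z) := by
        rw [← mul_assoc]; gcongr
    _ ≤ _ := by gcongr

theorem eLpNorm_ofReal_rpow_eq_lintegral {α : Type*} [MeasurableSpace α] {μ : Measure α}
    {f : α → ℝ} {p : ℝ} (hp : 0 < p) :
    eLpNorm f (ENNReal.ofReal p) μ ^ p = ∫⁻ x, ‖f x‖ₑ ^ p ∂μ := by
  have h := eLpNorm_nnreal_pow_eq_lintegral (f := f) (μ := μ) (Real.toNNReal_pos.2 hp).ne'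
  rwa [Real.coe_toNNReal _ hp.le] at h

theorem morreyNormOn_le_ofReal_mul_eLpNorm {n : ℕ} {p d : ℝ} (hp : 0 < p)
    {Ω : Set (EuclideanSpace ℝ (Fin n))} {f : EuclideanSpace ℝ (Fin n) → ℝ}
    {μ : Measure (EuclideanSpace ℝ (Fin n))} {C : ℝ} (hC : 0 ≤ C)
    (hΩ : ∫⁻ z in Ω, ‖f z‖ₑ ^ p ≤ ∫⁻ z, ‖f z‖ₑ ^ p ∂μ)
    (hball : ∀ ρ ∈ Set.Ioc (0 : ℝ) 1, ∀ x, ENNReal.ofReal (ρ ^ (d - n)) *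
      ∫⁻ z in ball x ρ ∩ Ω, ‖f z‖ₑ ^ p ≤ ENNReal.ofReal C * ∫⁻ z, ‖f z‖ₑ ^ p ∂μ) :
    morreyNormOn n p d Ω f ≤
      ENNReal.ofReal ((1 + C) ^ (1 / p)) * eLpNorm f (ENNReal.ofReal p) μ := by
  set J := eLpNorm f (ENNReal.ofReal p) μ
  have hJ : J ^ p = ∫⁻ z, ‖f z‖ₑ ^ p ∂μ := eLpNorm_ofReal_rpow_eq_lintegral hp
  calc morreyNormOn n p d Ω f ≤ (J ^ p + ENNReal.ofReal C * J ^ p) ^ (1 / p) := by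
        refine ENNReal.rpow_le_rpow (add_le_add ?_ (iSup₂_le fun ρ hρ => iSup_le fun x => ?_))
          (by positivity)
        · rwa [eLpNorm_ofReal_rpow_eq_lintegral hp, hJ]
        · rw [Measure.restrict_restrict measurableSet_ball, eLpNorm_ofReal_rpow_eq_lintegral hp, hJ]
          exact hball ρ hρ x
    _ = ENNReal.ofReal ((1 + C) ^ (1 / p)) * J := by
        rw [← one_add_mul, ENNReal.mul_rpow_of_nonneg _ _ (by positivity), ← ENNReal.rpow_mul,
          mul_one_div_cancel hp.ne', ENNReal.rpow_one, ← ENNReal.ofReal_one,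
          ← ENNReal.ofReal_add zero_le_one hC, ENNReal.ofReal_rpow_of_pos (by positivity)]

theorem Real.rpow_natCast_sub_natCast {ρ : ℝ} (hρ : 0 ≤ ρ) {d n : ℕ} (hd : d ≤ n) :
    ρ ^ ((d : ℝ) - n) = ρ⁻¹ ^ (n - d) := by
  rw [← Real.rpow_natCast, Real.inv_rpow hρ, ← Real.rpow_neg hρ, Nat.cast_sub hd, neg_sub]

theorem Fin.card_filter_le_val (n d : ℕ) :
    ({i : Fin n | d ≤ (i : ℕ)} : Finset (Fin n)).card = n - d := by
  have h := Finset.card_filter_add_card_filter_not (s := Finset.univ) fun i : Fin n => (i : ℕ) < d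
  simp only [Fin.card_filter_val_lt, not_lt, Finset.card_univ, Fintype.card_fin] at h
  omega

theorem morreyNormOn_le_of_depends_on_first_coords_general
    (n d : ℕ) (hd : d ≤ n) (p : ℝ) (hp : 1 ≤ p)
    (Ω₁ Ω₂ : Set (EuclideanSpace ℝ (Fin n)))
    (hΩ₁ : IsOpen Ω₁)
    (hcomp : IsCompact (closure Ω₂)) (hsub : closure Ω₂ ⊆ Ω₁) :
    ∃ c : ℝ, 0 < c ∧ ∀ f : EuclideanSpace ℝ (Fin n) → ℝ,
      MemLp f (ENNReal.ofReal p) (volume.restrict Ω₁) →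
      (∀ x y : EuclideanSpace ℝ (Fin n),
        (∀ i : Fin n, (i : ℕ) < d → x i = y i) → f x = f y) →
      morreyNormOn n p d Ω₂ f ≤
        ENNReal.ofReal c * eLpNorm f (ENNReal.ofReal p) (volume.restrict Ω₁) := by
  obtain ⟨ε, hε, hK⟩ := hcomp.exists_cthickening_subset_open hΩ₁ hsub
  have hp0 : 0 < p := by linarith
  set T : Finset (Fin n) := {i | d ≤ (i : ℕ)}
  set C := (2 * √(Fintype.card (Fin n)) / ε) ^ T.card
  refine ⟨(1 + C) ^ (1 / p), by positivity, fun f _ hf => ?_⟩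
  have hg : ∀ v : EuclideanSpace ℝ (Fin n), (∀ i ∉ T, v i = 0) →
      Function.Periodic (fun z => ‖f z‖ₑ ^ p) v := fun v hv z => by
    simp only [hf (z + v) z fun i hi => by simp [hv i (by simpa [T] using hi)]]
  refine morreyNormOn_le_ofReal_mul_eLpNorm hp0 (by positivity)
    (lintegral_mono_set (subset_closure.trans hsub)) fun ρ hρ x => ?_
  rw [Real.rpow_natCast_sub_natCast hρ.1.le hd, ← Fin.card_filter_le_val]
  refine le_trans ?_ (inv_pow_card_mul_setLIntegral_ball_inter_le T hg
    isClosed_closure.measurableSet hε hK hρ.1 x)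
  gcongr
  exact subset_closure

/-- **Morrey bound for functions of `d` variables.**
Let `Ω₂ ⋐ Ω₁ ⊆ ℝⁿ` be open sets, `Ω₂` with compact closure contained in `Ω₁`, let
`0 ≤ d ≤ n` and `1 ≤ p < ∞`.  Then there is a constant `c > 0` (depending only on
`Ω₁, Ω₂, n, d, p`) such that every `f ∈ L^p(Ω₁)` depending only on the first `d`
coordinates lies in `L^p_d(Ω₂)` with `‖f‖_{L^p_d(Ω₂)} ≤ c ‖f‖_{L^p(Ω₁)}`. -/
theorem morreyNormOn_le_of_depends_on_first_coords
    (n d : ℕ) (hd : d ≤ n) (p : ℝ) (hp : 1 ≤ p)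
    (Ω₁ Ω₂ : Set (EuclideanSpace ℝ (Fin n)))
    (hΩ₁ : IsOpen Ω₁) (hΩ₂ : IsOpen Ω₂)
    (hcomp : IsCompact (closure Ω₂)) (hsub : closure Ω₂ ⊆ Ω₁) :
    ∃ c : ℝ, 0 < c ∧ ∀ f : EuclideanSpace ℝ (Fin n) → ℝ,
      MemLp f (ENNReal.ofReal p) (volume.restrict Ω₁) →
      (∀ x y : EuclideanSpace ℝ (Fin n),
        (∀ i : Fin n, (i : ℕ) < d → x i = y i) → f x = f y) →
      morreyNormOn n p d Ω₂ f ≤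
        ENNReal.ofReal c * eLpNorm f (ENNReal.ofReal p) (volume.restrict Ω₁) :=
  morreyNormOn_le_of_depends_on_first_coords_general n d hd p hp Ω₁ Ω₂ hΩ₁ hcomp hsub
end
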